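/- arXiv:2304.15000 — 5 statements merged into one kernel-verified Lean document; each statement's English description precedes it below -/
import Mathlib

section
/- Let S be a finite type and T : S → S a function that is not injective. Then there is no quantum embedding of (S, T): for every finite type L, every unitary operator U on EuclideanSpace ℂ (S × L), and every η₀ : H_L with ‖η₀‖ = 1, it is NOT the case that for every ψ : H_S there exists η' : H_L of norm 1 with U (ψ ⊗ η₀) = (𝒯 ψ) ⊗ η'. (No-Embedding Theorem.) -/
noncomputable section

/-- The tensor product of `ψ : H_S` and `η : H_L`, identified with a vector in
`EuclideanSpace ℂ (S × L)`. -/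
def tensor {S L : Type*} [Fintype S] [Fintype L]
    (ψ : EuclideanSpace ℂ S) (η : EuclideanSpace ℂ L) :
    EuclideanSpace ℂ (S × L) :=
  WithLp.toLp 2 (fun p => ψ p.1 * η p.2)

/-- The standard basis vector at `s` (indicator function of `s`). -/
def e {S : Type*} [Fintype S] [DecidableEq S] (s : S) : EuclideanSpace ℂ S :=
  EuclideanSpace.single s 1

/-- The linearization of `T : S → S`: the unique linear map with `𝒯 e_s = e_{T s}`. -/
def linearize {S : Type*} [Fintype S] [DecidableEq S] (T : S → S) :
    EuclideanSpace ℂ S →ₗ[ℂ] EuclideanSpace ℂ S where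
  toFun ψ := ∑ s : S, ψ s • e (T s)
  map_add' ψ φ := by
    simp [PiLp.add_apply, add_smul, Finset.sum_add_distrib]
  map_smul' c ψ := by
    simp [PiLp.smul_apply, smul_smul, Finset.smul_sum]

lemma linearize_e {S : Type} [Fintype S] [DecidableEq S] (T : S → S) (s : S) :
    linearize T (e s) = e (T s) := by
  simp only [linearize, LinearMap.coe_mk, AddHom.coe_mk]
  rw [Finset.sum_eq_single s]
  · simp [e]
  · intro b _ hb
    simp [e, EuclideanSpace.single_apply, hb]
  · simp

/-- **No-Embedding Theorem.** If `T` is not injective, then `(S, T)` admits no quantum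
embedding. -/
theorem no_embedding {S : Type} [Fintype S] [DecidableEq S]
    (T : S → S) (hT : ¬ Function.Injective T)
    (L : Type) [Fintype L]
    (U : EuclideanSpace ℂ (S × L) ≃ₗᵢ[ℂ] EuclideanSpace ℂ (S × L))
    (η₀ : EuclideanSpace ℂ L) (hη₀ : ‖η₀‖ = 1) :
    ¬ (∀ ψ : EuclideanSpace ℂ S, ∃ η' : EuclideanSpace ℂ L,
        ‖η'‖ = 1 ∧ U (tensor ψ η₀) = tensor (linearize T ψ) η') := by
  intro h
  simp only [Function.Injective, not_forall] at hT
  obtain ⟨s₁, s₂, hTeq, hne⟩ := hT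
  obtain ⟨η', _, hU⟩ := h (e s₁ - e s₂)
  have hlin : linearize T (e s₁ - e s₂) = 0 := by
    rw [map_sub, linearize_e, linearize_e, hTeq, sub_self]
  rw [hlin] at hU
  have htz : tensor (0 : EuclideanSpace ℂ S) η' = 0 := by
    ext p; simp [tensor]
  rw [htz] at hU
  have hz : tensor (e s₁ - e s₂) η₀ = 0 := by
    have := U.injective (hU.trans (map_zero U.toLinearIsometry).symm)
    simpa using this
  have hη₀ne : η₀ ≠ 0 := by intro h0; rw [h0, norm_zero] at hη₀; norm_num at hη₀
  obtain ⟨l, hl⟩ : ∃ l, η₀ l ≠ 0 := by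
    by_contra hc
    push_neg at hc
    exact hη₀ne (by ext l; simpa using hc l)
  have := congrArg (fun v => v (s₁, l)) hz
  simp [tensor, e, PiLp.sub_apply, EuclideanSpace.single_apply, hl] at this
  rw [if_neg hne] at this
  norm_num at this
end
end

section
/- Let S be a finite type, ℓ₀ : S a fixed element, and f : S → S an arbitrary (possibly non-injective) function. Then there exists a unitary operator U on EuclideanSpace ℂ (S × S) such that U (e_s ⊗ e_{ℓ₀}) = e_{f s} ⊗ e_s for every s : S. In particular, (S, U, e_{ℓ₀}) is a classical embedding of (S, f) in which the history state attached to input s is e_s (the one-step Landauer embedding). -/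
noncomputable section

lemma tensor_e {S L : Type} [Fintype S] [Fintype L] [DecidableEq S] [DecidableEq L]
    (a : S) (b : L) : tensor (e a) (e b) = EuclideanSpace.single (a, b) 1 := by
  ext p
  simp only [tensor, e, EuclideanSpace.single_apply, PiLp.toLp_apply]
  rcases p with ⟨x, y⟩
  by_cases h1 : x = a <;> by_cases h2 : y = b <;>
    simp [h1, h2, Prod.ext_iff]

/-- **One-step Landauer embedding.** For an arbitrary (possibly non-injective) `f : S → S`,
there is a unitary `U` on `EuclideanSpace ℂ (S × S)` with `U (e_s ⊗ e_{ℓ₀}) = e_{f s} ⊗ e_s`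
for every `s`; in particular `(S, U, e_{ℓ₀})` is a classical embedding of `(S, f)` whose
history state attached to input `s` is `e_s`. -/
theorem landauer_embedding {S : Type} [Fintype S] [DecidableEq S]
    (ℓ₀ : S) (f : S → S) :
    ∃ U : EuclideanSpace ℂ (S × S) ≃ₗᵢ[ℂ] EuclideanSpace ℂ (S × S),
      ∀ s : S, U (tensor (e s) (e ℓ₀)) = tensor (e (f s)) (e s) := by
  classical
  let h1 : S × S ≃ S × S := Equiv.prodShear (Equiv.refl S) (fun s => Equiv.swap ℓ₀ s)
  let h2 : S × S ≃ S × S :=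
    (Equiv.prodComm S S).trans
      ((Equiv.prodShear (Equiv.refl S) (fun l => Equiv.swap l (f l))).trans
        (Equiv.prodComm S S))
  let h : S × S ≃ S × S := h1.trans h2
  refine ⟨LinearIsometryEquiv.piLpCongrLeft 2 ℂ ℂ h, fun s => ?_⟩
  have hx : h (s, ℓ₀) = (f s, s) := by
    simp [h, h1, h2, Equiv.prodShear, Equiv.swap_apply_left]
  rw [tensor_e, tensor_e]
  have := LinearIsometryEquiv.piLpCongrLeft_single (p := 2) (𝕜 := ℂ) (E := ℂ) h (s, ℓ₀) (1 : ℂ)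
  have hsingle : (EuclideanSpace.single (s, ℓ₀) (1:ℂ)) =
      PiLp.single 2 (s, ℓ₀) (1:ℂ) := rfl
  rw [hsingle, this, hx]
end
end

section
/- (Synchronization on the computational basis suffices.) Let C and D be finite types, T : C × D ≃ C × D a bijective state transition with unitary linearization 𝒯, κ₀ : H_C with ‖κ₀‖ = 1, t : ℕ, and κ' : H_C a nonzero vector. Suppose that for every basis data state d : D there exists δ'_d : H_D with 𝒯^t (κ₀ ⊗ e_d) = κ' ⊗ δ'_d. Then for every δ₀ : H_D there exists δ' : H_D with 𝒯^t (κ₀ ⊗ δ₀) = κ' ⊗ δ'; that is, the system is synchronized with final control state κ' for all superposition inputs. -/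
noncomputable section

lemma euclid_sum_apply {X Y : Type*} [Fintype Y] (f : Y → EuclideanSpace ℂ X)
    (p : X) : (∑ d : Y, f d) p = ∑ d : Y, f d p :=
  by rw [WithLp.ofLp_sum, Finset.sum_apply]

/-- **Synchronization on the computational basis suffices.** If the final control state `κ'` is
fixed across all computational-basis data inputs, then it is fixed across all superposition
inputs. -/
theorem synchronized_of_basis_synchronized {C D : Type}
    [Fintype C] [DecidableEq C] [Fintype D] [DecidableEq D]
    (T : (C × D) ≃ (C × D))
    (𝒯 : EuclideanSpace ℂ (C × D) ≃ₗᵢ[ℂ] EuclideanSpace ℂ (C × D))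
    (h𝒯 : ∀ p : C × D, 𝒯 (e p) = e (T p))
    (κ₀ : EuclideanSpace ℂ C) (hκ₀ : ‖κ₀‖ = 1) (t : ℕ)
    (κ' : EuclideanSpace ℂ C) (hκ' : κ' ≠ 0)
    (hbasis : ∀ d : D, ∃ δ' : EuclideanSpace ℂ D,
      (𝒯 ^ t) (tensor κ₀ (e d)) = tensor κ' δ') :
    ∀ δ₀ : EuclideanSpace ℂ D, ∃ δ' : EuclideanSpace ℂ D,
      (𝒯 ^ t) (tensor κ₀ δ₀) = tensor κ' δ' := by
  intro δ₀
  choose δ' hδ' using hbasis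
  refine ⟨∑ d, δ₀ d • δ' d, ?_⟩
  have expand : tensor κ₀ δ₀ = ∑ d, δ₀ d • tensor κ₀ (e d) := by
    ext p
    rw [euclid_sum_apply]
    simp [tensor, e, PiLp.smul_apply, smul_eq_mul,
      EuclideanSpace.single_apply, mul_ite, Finset.sum_ite_eq', mul_comm]
  rw [expand, map_sum]
  simp only [map_smul, hδ']
  ext p
  rw [euclid_sum_apply]
  simp only [tensor, PiLp.toLp_apply, PiLp.smul_apply, smul_eq_mul, euclid_sum_apply,
    Finset.mul_sum]
  exact Finset.sum_congr rfl fun d _ => by ring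
end
end

section
/- (Histories of merged inputs are orthogonal.) Let S and L be finite types, U a unitary operator on EuclideanSpace ℂ (S × L), η₀ : H_L with ‖η₀‖ = 1, η₁, η₂ : H_L, and s₁, s₂, s' : S with s₁ ≠ s₂. If U (e_{s₁} ⊗ η₀) = e_{s'} ⊗ η₁ and U (e_{s₂} ⊗ η₀) = e_{s'} ⊗ η₂, then the inner product ⟪η₁, η₂⟫ equals 0. -/
noncomputable section

open scoped InnerProductSpace in
lemma inner_tensor {S L : Type} [Fintype S] [Fintype L]
    (ψ ψ' : EuclideanSpace ℂ S) (η η' : EuclideanSpace ℂ L) :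
    ⟪tensor ψ η, tensor ψ' η'⟫_ℂ = ⟪ψ, ψ'⟫_ℂ * ⟪η, η'⟫_ℂ := by
  simp only [PiLp.inner_apply, RCLike.inner_apply, tensor, PiLp.toLp_apply, map_mul, Fintype.sum_prod_type]
  rw [Finset.sum_mul_sum]
  exact Finset.sum_congr rfl fun s _ => Finset.sum_congr rfl fun l _ => by ring

open scoped InnerProductSpace in
/-- **Histories of merged inputs are orthogonal.** If a unitary `U` maps `e_{s₁} ⊗ η₀` and
`e_{s₂} ⊗ η₀` (with `s₁ ≠ s₂`) to `e_{s'} ⊗ η₁` and `e_{s'} ⊗ η₂` respectively, then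
`⟪η₁, η₂⟫ = 0`. -/
theorem histories_orthogonal {S L : Type} [Fintype S] [DecidableEq S] [Fintype L]
    (U : EuclideanSpace ℂ (S × L) ≃ₗᵢ[ℂ] EuclideanSpace ℂ (S × L))
    (η₀ : EuclideanSpace ℂ L) (hη₀ : ‖η₀‖ = 1)
    (η₁ η₂ : EuclideanSpace ℂ L) (s₁ s₂ s' : S) (hne : s₁ ≠ s₂)
    (h₁ : U (tensor (e s₁) η₀) = tensor (e s') η₁)
    (h₂ : U (tensor (e s₂) η₀) = tensor (e s') η₂) :
    ⟪η₁, η₂⟫_ℂ = 0 := by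
  have key := U.inner_map_map (tensor (e s₁) η₀) (tensor (e s₂) η₀)
  rw [h₁, h₂, inner_tensor, inner_tensor] at key
  have he : ⟪e s₁, e s₂⟫_ℂ = 0 := by
    simp [e, EuclideanSpace.inner_single_left, EuclideanSpace.single_apply, hne.symm]
  have he' : ⟪e s', e s'⟫_ℂ = 1 := by
    simp [e, EuclideanSpace.inner_single_left, EuclideanSpace.single_apply]
  rw [he, he'] at key
  simpa using key
end
end

section
/- Fix k : ℕ. The state transition semantics of the get instruction on a k-bit register, namely the map from Fin k × (Fin k → Bool) to Fin k × Bool × (Fin k → Bool) sending (i, x) ↦ (i, x i, Function.update x i false) — which extracts the i-th bit of the register x into a fresh output slot and zeroes that bit in x — is injective. -/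
/-- The state transition semantics of the `get` instruction — sending
`(i, x) ↦ (i, x i, Function.update x i false)` — is injective. -/
theorem get_injective (k : ℕ) :
    Function.Injective (fun ix : Fin k × (Fin k → Bool) =>
      (ix.1, ix.2 ix.1, Function.update ix.2 ix.1 false)) := by
  rintro ⟨i, x⟩ ⟨j, y⟩ h
  simp only [Prod.mk.injEq] at h
  obtain ⟨rfl, hb, hf⟩ := h
  refine Prod.ext rfl ?_
  funext t
  by_cases ht : t = i
  · subst ht; exact hb
  · have := congrFun hf t
    simpa [Function.update, ht] using this
end
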